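/- Let {a_n}_{n∈ℕ} be a sequence of complex numbers and θ > 0 such that Σ_{n=0}^∞ |a_n|² exp(2M(θ√n)) < ∞, where M is the associated function of a sequence {M_p} satisfying (M.1), (M.2) with constant H, and (M.3)''. Then for every 0 < m < θ/(8H) with m ≤ m₀ (the constant from the Hermite estimate), the series Σ a_n H_n converges absolutely in each norm ||φ||_{M_p,m} = sup_{α,β} (m^{α+β}/(M_α M_β)) ||(1+x²)^{β/2} φ^{(α)}||_∞, and the sum φ satisfies ||φ||_{M_p,m} ≤ C (Σ |a_n|² exp(2M(θ√n)))^{1/2} for some constant C. -/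

import Mathlib

set_option linter.unusedSectionVars false
set_option maxHeartbeats 1000000

/-- The `n`-th Hermite function. -/
noncomputable def hermiteFn (n : ℕ) : ℝ → ℝ :=
  fun x => (-1 : ℝ) ^ n * Real.pi ^ (-(1 : ℝ) / 4) * (2 : ℝ) ^ (-(n : ℝ) / 2) *
    (Real.sqrt (n.factorial))⁻¹ * Real.exp (x ^ 2 / 2) *
    iteratedDeriv n (fun t => Real.exp (-t ^ 2)) x

lemma hermite_smooth (n : ℕ) : ContDiff ℝ (⊤ : ℕ∞) (hermiteFn n) := by
  unfold hermiteFn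
  apply ContDiff.mul
  apply ContDiff.mul
  · exact contDiff_const
  · exact Real.contDiff_exp.comp ((contDiff_id.pow 2).div_const 2)
  · rw [iteratedDeriv_eq_iterate]
    exact ContDiff.iterate_deriv n (Real.contDiff_exp.comp (contDiff_id.pow 2).neg)


lemma const_mul_ofReal_eq_clm_comp (c : ℂ) (f : ℝ → ℝ) :
    (fun y => c * (f y : ℂ)) = ⇑(c • Complex.ofRealCLM) ∘ f := by
  funext y; simp [smul_eq_mul]

lemma contDiff_const_mul_ofReal (c : ℂ) {f : ℝ → ℝ} (hf : ContDiff ℝ (⊤:ℕ∞) f) :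
    ContDiff ℝ (⊤:ℕ∞) (fun y => c * (f y : ℂ)) := by
  rw [const_mul_ofReal_eq_clm_comp]
  exact (c • Complex.ofRealCLM).contDiff.comp hf

lemma iteratedDeriv_const_mul_ofReal (c : ℂ) {f : ℝ → ℝ} (hf : ContDiff ℝ (⊤:ℕ∞) f)
    (k : ℕ) (x : ℝ) :
    iteratedDeriv k (fun y => c * (f y : ℂ)) x = c * ((iteratedDeriv k f x : ℝ) : ℂ) := by
  rw [const_mul_ofReal_eq_clm_comp, iteratedDeriv_eq_iteratedFDeriv,
    ContinuousLinearMap.iteratedFDeriv_comp_left _ hf.contDiffAt (by exact_mod_cast le_top)]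
  simp [iteratedDeriv_eq_iteratedFDeriv, smul_eq_mul]

lemma norm_iteratedFDeriv_const_mul_ofReal (c : ℂ) {f : ℝ → ℝ} (hf : ContDiff ℝ (⊤:ℕ∞) f)
    (k : ℕ) (x : ℝ) :
    ‖iteratedFDeriv ℝ k (fun y => c * (f y : ℂ)) x‖ = ‖c‖ * |iteratedDeriv k f x| := by
  rw [norm_iteratedFDeriv_eq_norm_iteratedDeriv, iteratedDeriv_const_mul_ofReal c hf k x,
    norm_mul, Complex.norm_real, Real.norm_eq_abs]


section
variable {Mp : ℕ → ℝ} (hpos : ∀ p, 0 < Mp p) (hM0 : Mp 0 = 1)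
    {A H : ℝ} (hA : 0 < A) (hH : 0 < H)
    (hM2 : ∀ p q : ℕ, q ≤ p → Mp p ≤ A * H ^ p * Mp q * Mp (p - q))
    {C₀ L : ℝ} (hC₀ : 0 < C₀) (hL : 0 < L)
    (hM3 : ∀ p : ℕ, ((p : ℝ)) ^ ((p : ℝ) / 2) ≤ C₀ * L ^ p * Mp p)

include hpos hM0 hC₀ hL hM3 in
lemma term_bdd {ρ : ℝ} (hρ : 0 < ρ) (p : ℕ) :
    Real.log (ρ ^ p / Mp p) ≤ |Real.log C₀| + Real.exp (2 * Real.log (L * ρ)) / 2 := by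
  have hMp := hpos p
  rcases Nat.eq_zero_or_pos p with rfl | hp
  · simp [hM0]
    positivity
  · have hpc : (0:ℝ) < p := by exact_mod_cast hp
    have hiter : Real.log (ρ ^ p / Mp p) = p * Real.log ρ - Real.log (Mp p) := by
      rw [Real.log_div (by positivity) (ne_of_gt hMp), Real.log_pow]
    have hlogs : (p : ℝ) / 2 * Real.log p ≤ Real.log C₀ + p * Real.log L + Real.log (Mp p) := by
      have := Real.log_le_log (by positivity) (hM3 p)
      rw [Real.log_rpow hpc] at this
      rw [Real.log_mul (by positivity) (ne_of_gt hMp), Real.log_mul (ne_of_gt hC₀) (by positivity),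
        Real.log_pow] at this
      linarith
    set x := Real.log (L * ρ) with hx
    have key : (p:ℝ) * x - (p:ℝ)/2 * Real.log p ≤ Real.exp (2*x) / 2 := by
      have hlp : Real.log (Real.exp (2*x) / p) ≤ Real.exp (2*x) / p - 1 :=
        Real.log_le_sub_one_of_pos (by positivity)
      rw [Real.log_div (by positivity) (ne_of_gt hpc), Real.log_exp] at hlp
      have hmul := mul_le_mul_of_nonneg_left hlp (by positivity : (0:ℝ) ≤ (p:ℝ)/2)
      have hid : (p:ℝ)/2 * (Real.exp (2*x)/p - 1) = Real.exp (2*x)/2 - p/2 := by field_simp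
      nlinarith
    have hxsplit : x = Real.log L + Real.log ρ := Real.log_mul (ne_of_gt hL) (ne_of_gt hρ)
    have : Real.log C₀ ≤ |Real.log C₀| := le_abs_self _
    nlinarith

include hpos hM0 hC₀ hL hM3 in
lemma MA_bdd {ρ : ℝ} (hρ : 0 < ρ) :
    BddAbove (Set.range fun p : ℕ => Real.log (ρ ^ p / Mp p)) := by
  refine ⟨|Real.log C₀| + Real.exp (2 * Real.log (L * ρ)) / 2, ?_⟩
  rintro y ⟨p, rfl⟩
  exact term_bdd hpos hM0 hC₀ hL hM3 hρ p
end

section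
variable {Mp : ℕ → ℝ} (hpos : ∀ p, 0 < Mp p) (hM0 : Mp 0 = 1)
    {A H : ℝ} (hA : 0 < A) (hH : 0 < H)
    (hM2 : ∀ p q : ℕ, q ≤ p → Mp p ≤ A * H ^ p * Mp q * Mp (p - q))
    {C₀ L : ℝ} (hC₀ : 0 < C₀) (hL : 0 < L)
    (hM3 : ∀ p : ℕ, ((p : ℝ)) ^ ((p : ℝ) / 2) ≤ C₀ * L ^ p * Mp p)
    {MA : ℝ → ℝ} (hMA : ∀ ρ : ℝ, MA ρ = ⨆ p : ℕ, Real.log (ρ ^ p / Mp p))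

include hpos hM0 hC₀ hL hM3 hMA

lemma MA_ge {ρ : ℝ} (hρ : 0 < ρ) (p : ℕ) : Real.log (ρ ^ p / Mp p) ≤ MA ρ := by
  rw [hMA]
  exact le_ciSup (MA_bdd hpos hM0 hC₀ hL hM3 hρ) p

lemma MA_nonneg {ρ : ℝ} (hρ : 0 < ρ) : 0 ≤ MA ρ := by
  have := MA_ge hpos hM0 hC₀ hL hM3 hMA hρ 0
  simpa [hM0] using this

lemma MA_term (p : ℕ) {ρ : ℝ} (hρ : 0 < ρ) :
    Real.log (ρ ^ p / Mp p) = p * Real.log ρ - Real.log (Mp p) := by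
  rw [Real.log_div (by positivity) (ne_of_gt (hpos p)), Real.log_pow]

lemma exp_neg_MA_le (p : ℕ) {ρ : ℝ} (hρ : 0 < ρ) :
    Real.exp (-MA ρ) ≤ Mp p / ρ ^ p := by
  have h := MA_ge hpos hM0 hC₀ hL hM3 hMA hρ p
  rw [MA_term hpos hM0 hC₀ hL hM3 hMA p hρ] at h
  have : -MA ρ ≤ Real.log (Mp p / ρ ^ p) := by
    rw [Real.log_div (ne_of_gt (hpos p)) (by positivity), Real.log_pow]
    linarith
  calc Real.exp (-MA ρ) ≤ Real.exp (Real.log (Mp p / ρ ^ p)) := Real.exp_le_exp.2 this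
    _ = Mp p / ρ ^ p := Real.exp_log (div_pos (hpos p) (by positivity))

lemma MA_mono {ρ₁ ρ₂ : ℝ} (h1 : 0 < ρ₁) (h12 : ρ₁ ≤ ρ₂) : MA ρ₁ ≤ MA ρ₂ := by
  rw [hMA ρ₁]
  apply ciSup_le
  intro p
  refine le_trans ?_ (MA_ge hpos hM0 hC₀ hL hM3 hMA (lt_of_lt_of_le h1 h12) p)
  apply Real.log_le_log (div_pos (by positivity) (hpos p))
  gcongr <;> first | exact (hpos p).le | exact h1.le | exact h12

include hA hH hM2 in
lemma MA_two {ρ : ℝ} (hρ : 0 < ρ) : 2 * MA ρ ≤ MA (H * ρ) + Real.log A := by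
  have hHρ : 0 < H * ρ := by positivity
  have key : MA ρ ≤ (MA (H * ρ) + Real.log A) / 2 := by
    rw [hMA ρ]
    apply ciSup_le
    intro q
    have h2q := MA_ge hpos hM0 hC₀ hL hM3 hMA hHρ (2 * q)
    rw [MA_term hpos hM0 hC₀ hL hM3 hMA _ hHρ] at h2q
    rw [MA_term hpos hM0 hC₀ hL hM3 hMA _ hρ]
    have hsub : 2 * q - q = q := by omega
    have hm2 := hM2 (2 * q) q (by omega)
    rw [hsub] at hm2
    have hlog : Real.log (Mp (2 * q)) ≤ Real.log A + (2 * q) * Real.log H + 2 * Real.log (Mp q) := by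
      have := Real.log_le_log (hpos _) hm2
      rw [Real.log_mul (mul_pos (mul_pos hA (by positivity)) (hpos q)).ne' (ne_of_gt (hpos q)),
        Real.log_mul (mul_pos hA (by positivity)).ne' (ne_of_gt (hpos q)),
        Real.log_mul (ne_of_gt hA) (by positivity), Real.log_pow] at this
      push_cast at this ⊢
      linarith
    have hlHρ : Real.log (H * ρ) = Real.log H + Real.log ρ := Real.log_mul (ne_of_gt hH) (ne_of_gt hρ)
    have hc : ((2 * q : ℕ) : ℝ) = 2 * q := by push_cast; ring
    rw [hc, hlHρ] at h2q
    linarith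
  linarith

lemma MA_convex {ρ₁ ρ₂ ρ₃ : ℝ} (h1 : 0 < ρ₁) (h12 : ρ₁ < ρ₂) (h23 : ρ₂ < ρ₃) :
    MA ρ₂ ≤ ((Real.log ρ₃ - Real.log ρ₂) * MA ρ₁ + (Real.log ρ₂ - Real.log ρ₁) * MA ρ₃) /
      (Real.log ρ₃ - Real.log ρ₁) := by
  have h2 : 0 < ρ₂ := h1.trans h12
  have h3 : 0 < ρ₃ := h2.trans h23
  have t12 : Real.log ρ₁ < Real.log ρ₂ := Real.log_lt_log h1 h12
  have t23 : Real.log ρ₂ < Real.log ρ₃ := Real.log_lt_log h2 h23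
  rw [hMA ρ₂]
  apply ciSup_le
  intro p
  rw [MA_term hpos hM0 hC₀ hL hM3 hMA p h2, le_div_iff₀ (by linarith)]
  have g1 := MA_ge hpos hM0 hC₀ hL hM3 hMA h1 p
  have g3 := MA_ge hpos hM0 hC₀ hL hM3 hMA h3 p
  rw [MA_term hpos hM0 hC₀ hL hM3 hMA p h1] at g1
  rw [MA_term hpos hM0 hC₀ hL hM3 hMA p h3] at g3
  nlinarith [mul_le_mul_of_nonneg_left g1 (le_of_lt (sub_pos.2 t23)),
    mul_le_mul_of_nonneg_left g3 (le_of_lt (sub_pos.2 t12))]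

end

lemma cs_summable {f g : ℕ → ℝ} (hf : ∀ n, 0 ≤ f n) (hg : ∀ n, 0 ≤ g n)
    (hf2 : Summable fun n => f n ^ 2) (hg2 : Summable fun n => g n ^ 2) :
    Summable fun n => f n * g n := by
  apply Summable.of_nonneg_of_le (fun n => mul_nonneg (hf n) (hg n))
    (fun n => ?_) (hf2.add hg2)
  nlinarith [sq_nonneg (f n - g n)]

lemma cs_tsum {f g : ℕ → ℝ} (hf : ∀ n, 0 ≤ f n) (hg : ∀ n, 0 ≤ g n)
    (hf2 : Summable fun n => f n ^ 2) (hg2 : Summable fun n => g n ^ 2) :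
    ∑' n, f n * g n ≤ Real.sqrt (∑' n, f n ^ 2) * Real.sqrt (∑' n, g n ^ 2) := by
  apply Summable.tsum_le_of_sum_le (cs_summable hf hg hf2 hg2)
  intro s
  refine (Real.sum_mul_le_sqrt_mul_sqrt s f g).trans ?_
  apply mul_le_mul
  · exact Real.sqrt_le_sqrt (Summable.sum_le_tsum s (fun i _ => sq_nonneg _) hf2)
  · exact Real.sqrt_le_sqrt (Summable.sum_le_tsum s (fun i _ => sq_nonneg _) hg2)
  · positivity
  · positivity

section
variable {Mp : ℕ → ℝ} (hpos : ∀ p, 0 < Mp p) (hM0 : Mp 0 = 1)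
    {A H : ℝ} (hA : 0 < A) (hH : 0 < H)
    (hM2 : ∀ p q : ℕ, q ≤ p → Mp p ≤ A * H ^ p * Mp q * Mp (p - q))
    {C₀ L : ℝ} (hC₀ : 0 < C₀) (hL : 0 < L)
    (hM3 : ∀ p : ℕ, ((p : ℝ)) ^ ((p : ℝ) / 2) ≤ C₀ * L ^ p * Mp p)
    {MA : ℝ → ℝ} (hMA : ∀ ρ : ℝ, MA ρ = ⨆ p : ℕ, Real.log (ρ ^ p / Mp p))

include hpos hM0 hA hH hM2 hC₀ hL hM3 hMA in
lemma key_diff (hH1 : 1 < H) {r θ : ℝ} (hr : 0 < r) (hrθ : r < θ) {n : ℕ} (hn : 1 ≤ n) :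
    2 * (MA (r * Real.sqrt n) - MA (θ * Real.sqrt n)) ≤
      2 * ((Real.log θ - Real.log r) / Real.log H) *
        (Real.log A - MA (r * Real.sqrt n / H)) := by
  have hσ : (1:ℝ) ≤ Real.sqrt n := by
    rw [show (1:ℝ) = Real.sqrt 1 by simp]
    exact Real.sqrt_le_sqrt (by exact_mod_cast hn)
  have hσ0 : 0 < Real.sqrt n := lt_of_lt_of_le one_pos hσ
  have hrσ : 0 < r * Real.sqrt n := mul_pos hr hσ0
  have h1 : 0 < r * Real.sqrt n / H := by positivity
  have h12 : r * Real.sqrt n / H < r * Real.sqrt n := by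
    rw [div_lt_iff₀ (by linarith)]
    nlinarith [hrσ]
  have h23 : r * Real.sqrt n < θ * Real.sqrt n := by nlinarith
  have hconv := MA_convex hpos hM0 hC₀ hL hM3 hMA h1 h12 h23
  have htwo := MA_two hpos hM0 hA hH hM2 hC₀ hL hM3 hMA h1
  rw [show H * (r * Real.sqrt n / H) = r * Real.sqrt n by field_simp] at htwo
  have hlogH : 0 < Real.log H := Real.log_pos hH1
  set d := Real.log θ - Real.log r with hd
  have hd0 : 0 < d := sub_pos.2 (Real.log_lt_log hr hrθ)
  have ht1 : Real.log (r * Real.sqrt n / H) = Real.log (r * Real.sqrt n) - Real.log H :=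
    Real.log_div hrσ.ne' (by positivity)
  have ht3 : Real.log (θ * Real.sqrt n) - Real.log (r * Real.sqrt n) = d := by
    rw [Real.log_mul (hr.trans hrθ).ne' hσ0.ne', Real.log_mul hr.ne' hσ0.ne', hd]
    ring
  rw [le_div_iff₀ (by rw [ht1]; linarith)] at hconv
  have hconv' : (d + Real.log H) * MA (r * Real.sqrt n) ≤
      d * MA (r * Real.sqrt n / H) + Real.log H * MA (θ * Real.sqrt n) := by
    have e1 : Real.log (θ * Real.sqrt n) - Real.log (r * Real.sqrt n / H) = d + Real.log H := by
      rw [ht1]; linarith [ht3]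
    have e2 : Real.log (r * Real.sqrt n) - Real.log (r * Real.sqrt n / H) = Real.log H := by
      rw [ht1]; ring
    rw [e1, ht3, e2] at hconv
    linarith [hconv]
  have hmain : Real.log H * (MA (r * Real.sqrt n) - MA (θ * Real.sqrt n)) ≤
      d * (Real.log A - MA (r * Real.sqrt n / H)) := by
    nlinarith [mul_le_mul_of_nonneg_left htwo hd0.le]
  have h2 : MA (r * Real.sqrt n) - MA (θ * Real.sqrt n) ≤
      d / Real.log H * (Real.log A - MA (r * Real.sqrt n / H)) := by
    rw [div_mul_eq_mul_div, le_div_iff₀ hlogH]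
    nlinarith [hmain]
  nlinarith [h2]

include hpos hM0 hA hH hM2 hC₀ hL hM3 hMA in
lemma key_summable (hH1 : 1 < H) {r θ : ℝ} (hr : 0 < r) (hrθ : r < θ) :
    Summable fun n : ℕ => Real.exp (2 * (MA (r * Real.sqrt n) - MA (θ * Real.sqrt n))) := by
  set c := (Real.log θ - Real.log r) / Real.log H with hc
  have hlogH : 0 < Real.log H := Real.log_pos hH1
  have hc0 : 0 < c := div_pos (sub_pos.2 (Real.log_lt_log hr hrθ)) hlogH
  set p : ℕ := ⌈2 / c⌉₊ with hp
  have hcp : 2 ≤ c * p := by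
    have := Nat.le_ceil (2 / c)
    calc (2:ℝ) = c * (2 / c) := by field_simp
      _ ≤ c * p := by apply mul_le_mul_of_nonneg_left this hc0.le
  set K := 2 * c * Real.log A + 2 * c * Real.log (Mp p) - 2 * c * p * Real.log (r / H) with hK
  rw [← summable_nat_add_iff 1]
  apply Summable.of_nonneg_of_le (fun n => (Real.exp_pos _).le)
    (f := fun n : ℕ => Real.exp K * (1 / ((n : ℝ) + 1) ^ 2))
  · intro n
    set N := n + 1 with hN
    have hn1 : 1 ≤ N := by omega
    have hσ : (1:ℝ) ≤ Real.sqrt N := by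
      rw [show (1:ℝ) = Real.sqrt 1 by simp]
      exact Real.sqrt_le_sqrt (by exact_mod_cast hn1)
    have hσ0 : 0 < Real.sqrt N := lt_of_lt_of_le one_pos hσ
    have hdiff := key_diff hpos hM0 hA hH hM2 hC₀ hL hM3 hMA hH1 hr hrθ hn1
    rw [← hc] at hdiff
    have h1 : 0 < r * Real.sqrt N / H := by positivity
    have hge := MA_ge hpos hM0 hC₀ hL hM3 hMA h1 p
    rw [MA_term hpos hM0 hC₀ hL hM3 hMA p h1] at hge
    have hlρ1 : Real.log (r * Real.sqrt N / H) = Real.log (r / H) + Real.log (Real.sqrt N) := by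
      rw [Real.log_div (by positivity) (by positivity), Real.log_mul hr.ne' hσ0.ne',
        Real.log_div hr.ne' (by positivity)]
      ring
    have hlσ : Real.log (Real.sqrt N) = Real.log N / 2 := Real.log_sqrt (by positivity)
    have hlogN : 0 ≤ Real.log N := Real.log_nonneg (by exact_mod_cast hn1)
    have hexp : 2 * (MA (r * Real.sqrt N) - MA (θ * Real.sqrt N)) ≤ K - 2 * Real.log N := by
      have h2 : 2 * c * (Real.log A - MA (r * Real.sqrt N / H)) ≤ K - 2 * Real.log N := by
        rw [hlρ1, hlσ] at hge
        have h3 : 2 * Real.log N ≤ c * p * Real.log N :=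
          mul_le_mul_of_nonneg_right hcp hlogN
        nlinarith [hge, hc0, hlogN]
      exact hdiff.trans h2
    calc Real.exp (2 * (MA (r * Real.sqrt N) - MA (θ * Real.sqrt N)))
        ≤ Real.exp (K - 2 * Real.log N) := Real.exp_le_exp.2 hexp
      _ = Real.exp K * (1 / ((n:ℝ) + 1) ^ 2) := by
          rw [Real.exp_sub]
          have hNc : ((N:ℕ):ℝ) = (n:ℝ) + 1 := by push_cast [hN]; ring
          rw [show (2:ℝ) * Real.log N = Real.log (((N:ℝ)) ^ (2:ℕ)) by
            rw [Real.log_pow]; push_cast; ring]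
          rw [Real.exp_log (by positivity), hNc]
          ring
  · apply Summable.mul_left
    have h := (Real.summable_one_div_nat_pow (p := 2)).mpr one_lt_two
    have := (summable_nat_add_iff 1).2 h
    simpa using this
end

/-- If `Σ |a_n|² exp(2M(θ√n)) < ∞` then, for `0 < m ≤ m₀` with `8mH < θ`,
the Hermite series `Σ a_n H_n` converges absolutely in each norm
`‖·‖_{M_p,m}` and its sum `φ` satisfies
`‖φ‖_{M_p,m} ≤ C (Σ |a_n|² exp(2M(θ√n)))^{1/2}`. -/
theorem hermite_series_convergence (Mp : ℕ → ℝ)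
    (hpos : ∀ p, 0 < Mp p) (hM0 : Mp 0 = 1)
    (hM1 : ∀ p : ℕ, 1 ≤ p → (Mp p) ^ 2 ≤ Mp (p - 1) * Mp (p + 1))
    (A H : ℝ) (hA : 0 < A) (hH : 0 < H)
    (hM2 : ∀ p q : ℕ, q ≤ p → Mp p ≤ A * H ^ p * Mp q * Mp (p - q))
    (C₀ L : ℝ) (hC₀ : 0 < C₀) (hL : 0 < L)
    (hM3 : ∀ p : ℕ, ((p : ℝ)) ^ ((p : ℝ) / 2) ≤ C₀ * L ^ p * Mp p)
    (MA : ℝ → ℝ) (hMA : ∀ ρ : ℝ, MA ρ = ⨆ p : ℕ, Real.log (ρ ^ p / Mp p))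
    -- the estimate of Lemma 1 with constants `C₁, m₀`
    (C₁ m₀ : ℝ) (hC₁ : 0 < C₁) (hm₀ : 0 < m₀)
    (hlem : ∀ m : ℝ, 0 < m → m ≤ m₀ → ∀ α β n : ℕ, ∀ x : ℝ,
      m ^ (α + β) / (Mp α * Mp β) *
          ((1 + x ^ 2) ^ ((β : ℝ) / 2) * |iteratedDeriv α (hermiteFn n) x|) ≤
        C₁ * Real.exp (MA (8 * m * H * Real.sqrt n)))
    (a : ℕ → ℂ) (θ : ℝ) (hθ : 0 < θ)
    (ha : Summable fun n : ℕ => ‖a n‖ ^ 2 * Real.exp (2 * MA (θ * Real.sqrt n)))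
    (m : ℝ) (hm1 : 0 < m) (hm2 : m < θ / (8 * H)) (hm3 : m ≤ m₀) :
    (∀ x : ℝ, Summable fun n : ℕ => a n * (hermiteFn n x : ℂ)) ∧
    (∀ α β : ℕ, Summable fun n : ℕ =>
      ‖a n‖ * (m ^ (α + β) / (Mp α * Mp β)) *
        ⨆ x : ℝ, (1 + x ^ 2) ^ ((β : ℝ) / 2) * |iteratedDeriv α (hermiteFn n) x|) ∧
    ∃ C : ℝ, 0 < C ∧ ∀ α β : ℕ, ∀ x : ℝ,
      m ^ (α + β) / (Mp α * Mp β) *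
          ((1 + x ^ 2) ^ ((β : ℝ) / 2) *
            ‖iteratedDeriv α (fun y : ℝ => ∑' n : ℕ, a n * (hermiteFn n y : ℂ)) x‖) ≤
        C * Real.sqrt (∑' n : ℕ, ‖a n‖ ^ 2 * Real.exp (2 * MA (θ * Real.sqrt n))) := by
  -- H must be > 1
  have hH1 : 1 < H := by
    by_contra hcon
    push_neg at hcon
    have hb : ∀ ρ : ℝ, 0 < ρ → MA ρ ≤ Real.log A := by
      intro ρ hρ
      have h2 := MA_two hpos hM0 hA hH hM2 hC₀ hL hM3 hMA hρ
      have hmono : MA (H * ρ) ≤ MA ρ :=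
        MA_mono hpos hM0 hC₀ hL hM3 hMA (by positivity) (by nlinarith)
      linarith
    set ρ := Real.exp (Real.log A + Real.log (Mp 1) + 1) with hρdef
    have hρ0 : 0 < ρ := Real.exp_pos _
    have hge := MA_ge hpos hM0 hC₀ hL hM3 hMA hρ0 1
    rw [MA_term hpos hM0 hC₀ hL hM3 hMA 1 hρ0] at hge
    rw [hρdef, Real.log_exp] at hge
    have := hb ρ hρ0
    push_cast at hge
    linarith
  have hr : 0 < 8 * m * H := by positivity
  have hrθ : 8 * m * H < θ := by
    have := (lt_div_iff₀ (by positivity : (0:ℝ) < 8 * H)).mp hm2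
    nlinarith
  -- the key summable weight
  have hS := key_summable hpos hM0 hA hH hM2 hC₀ hL hM3 hMA hH1 hr hrθ
  set g : ℕ → ℝ := fun n => Real.exp (MA (8 * m * H * Real.sqrt n) - MA (θ * Real.sqrt n))
    with hgdef
  set f : ℕ → ℝ := fun n => ‖a n‖ * Real.exp (MA (θ * Real.sqrt n)) with hfdef
  have hg0 : ∀ n, 0 ≤ g n := fun n => (Real.exp_pos _).le
  have hf0 : ∀ n, 0 ≤ f n := fun n => mul_nonneg (norm_nonneg _) (Real.exp_pos _).le
  have hg2 : Summable fun n => g n ^ 2 := by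
    have : (fun n : ℕ => g n ^ 2)
        = fun n : ℕ => Real.exp (2 * (MA (8 * m * H * Real.sqrt n) - MA (θ * Real.sqrt n))) := by
      funext n
      rw [hgdef, sq, ← Real.exp_add]
      ring_nf
    rw [this]
    exact hS
  have hf2 : Summable fun n => f n ^ 2 := by
    have : (fun n : ℕ => f n ^ 2)
        = fun n => ‖a n‖ ^ 2 * Real.exp (2 * MA (θ * Real.sqrt n)) := by
      funext n
      rw [hfdef, mul_pow, sq (Real.exp _), ← Real.exp_add, two_mul]
    rw [this]
    exact ha
  have hfg : (fun n => f n * g n)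
      = fun n => ‖a n‖ * Real.exp (MA (8 * m * H * Real.sqrt n)) := by
    funext n
    rw [hfdef, hgdef, mul_assoc, ← Real.exp_add]
    ring_nf
  -- summability of Σ ‖aₙ‖ exp(M(8mH√n)) and its Cauchy–Schwarz bound
  have hsum1 : Summable fun n => ‖a n‖ * Real.exp (MA (8 * m * H * Real.sqrt n)) := by
    rw [← hfg]
    exact cs_summable hf0 hg0 hf2 hg2
  set T := ∑' n : ℕ, ‖a n‖ ^ 2 * Real.exp (2 * MA (θ * Real.sqrt n)) with hTdef
  set S := ∑' n : ℕ, g n ^ 2 with hSdef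
  have hsumbound : ∑' n, ‖a n‖ * Real.exp (MA (8 * m * H * Real.sqrt n))
      ≤ Real.sqrt T * Real.sqrt S := by
    have h1 := cs_tsum hf0 hg0 hf2 hg2
    rw [show ∑' n, f n * g n
        = ∑' n, ‖a n‖ * Real.exp (MA (8 * m * H * Real.sqrt n)) by rw [hfg]] at h1
    rw [show ∑' n, f n ^ 2 = T by
      rw [hTdef]
      apply tsum_congr
      intro n
      rw [hfdef, mul_pow, sq (Real.exp _), ← Real.exp_add, two_mul]] at h1
    exact h1
  -- pointwise estimates from Lemma 1
  have hptwise := hlem m hm1 hm3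
  have habs : ∀ (α n : ℕ) (x : ℝ), |iteratedDeriv α (hermiteFn n) x|
      ≤ C₁ * Real.exp (MA (8 * m * H * Real.sqrt n)) * (Mp α / m ^ α) := by
    intro α n x
    have h := hptwise α 0 n x
    simp only [Nat.add_zero, hM0, mul_one, Nat.cast_zero, zero_div, Real.rpow_zero, one_mul] at h
    have hwa : 0 < m ^ α / Mp α := div_pos (pow_pos hm1 α) (hpos α)
    have h2 := mul_le_mul_of_nonneg_left h (le_of_lt (div_pos (hpos α) (pow_pos hm1 α)))
    calc |iteratedDeriv α (hermiteFn n) x|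
        = Mp α / m ^ α * (m ^ α / Mp α * |iteratedDeriv α (hermiteFn n) x|) := by
          have h1 : Mp α ≠ 0 := (hpos α).ne'
          have h2 : (m:ℝ) ^ α ≠ 0 := (pow_pos hm1 α).ne'
          field_simp
      _ ≤ Mp α / m ^ α * (C₁ * Real.exp (MA (8 * m * H * Real.sqrt n))) := h2
      _ = C₁ * Real.exp (MA (8 * m * H * Real.sqrt n)) * (Mp α / m ^ α) := by ring
  -- summable majorants for each derivative order
  have hmaj : ∀ k : ℕ, Summable fun n : ℕ =>
      ‖a n‖ * (C₁ * Real.exp (MA (8 * m * H * Real.sqrt n)) * (Mp k / m ^ k)) := by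
    intro k
    have := hsum1.mul_right (C₁ * (Mp k / m ^ k))
    apply this.congr
    intro n
    ring
  -- Part 1 : pointwise absolute convergence
  have part1 : ∀ x : ℝ, Summable fun n : ℕ => a n * (hermiteFn n x : ℂ) := by
    intro x
    apply Summable.of_norm
    apply Summable.of_nonneg_of_le (fun n => norm_nonneg _) (fun n => ?_) (hmaj 0)
    have h := habs 0 n x
    simp only [iteratedDeriv_zero, pow_zero, hM0] at h ⊢
    rw [norm_mul, Complex.norm_real, Real.norm_eq_abs]
    have := mul_le_mul_of_nonneg_left h (norm_nonneg (a n))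
    simpa using this
  refine ⟨part1, ?_, ?_⟩
  · -- Part 2 : summability of the norms
    intro α β
    have hw : 0 < m ^ (α + β) / (Mp α * Mp β) :=
      div_pos (pow_pos hm1 _) (mul_pos (hpos α) (hpos β))
    apply Summable.of_nonneg_of_le (fun n => ?_) (fun n => ?_) ((hsum1.mul_left C₁).congr
      (fun n => by ring : ∀ n, C₁ * (‖a n‖ * Real.exp (MA (8 * m * H * Real.sqrt n)))
        = ‖a n‖ * (C₁ * Real.exp (MA (8 * m * H * Real.sqrt n)))))
    · apply mul_nonneg (mul_nonneg (norm_nonneg _) hw.le)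
      apply Real.iSup_nonneg
      intro x
      positivity
    · have hsup : (⨆ x : ℝ, (1 + x ^ 2) ^ ((β : ℝ) / 2) * |iteratedDeriv α (hermiteFn n) x|)
          ≤ C₁ * Real.exp (MA (8 * m * H * Real.sqrt n)) / (m ^ (α + β) / (Mp α * Mp β)) := by
        apply ciSup_le
        intro x
        rw [le_div_iff₀ hw]
        have := hptwise α β n x
        linarith [this]
      calc ‖a n‖ * (m ^ (α + β) / (Mp α * Mp β)) *
            ⨆ x : ℝ, (1 + x ^ 2) ^ ((β : ℝ) / 2) * |iteratedDeriv α (hermiteFn n) x|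
          ≤ ‖a n‖ * (m ^ (α + β) / (Mp α * Mp β)) *
            (C₁ * Real.exp (MA (8 * m * H * Real.sqrt n)) / (m ^ (α + β) / (Mp α * Mp β))) := by
            apply mul_le_mul_of_nonneg_left hsup
            positivity
        _ = ‖a n‖ * (C₁ * Real.exp (MA (8 * m * H * Real.sqrt n))) := by
            have h1 : Mp α * Mp β ≠ 0 := (mul_pos (hpos α) (hpos β)).ne'
            have h2 : m ^ (α + β) ≠ 0 := (pow_pos hm1 _).ne'
            field_simp
            field_simp [(hpos α).ne', (hpos β).ne']
  · -- Part 3 : the norm bound for the sum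
    refine ⟨C₁ * (Real.sqrt S + 1), by positivity, ?_⟩
    intro α β x
    -- term-by-term differentiation
    have hFsm : ∀ n : ℕ, ContDiff ℝ (⊤ : ℕ∞) fun y : ℝ => a n * (hermiteFn n y : ℂ) :=
      fun n => contDiff_const_mul_ofReal (a n) (hermite_smooth n)
    have h'f : ∀ (k n : ℕ) (x' : ℝ), ‖iteratedFDeriv ℝ k (fun y : ℝ =>
        a n * (hermiteFn n y : ℂ)) x'‖
        ≤ ‖a n‖ * (C₁ * Real.exp (MA (8 * m * H * Real.sqrt n)) * (Mp k / m ^ k)) := by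
      intro k n x'
      rw [norm_iteratedFDeriv_const_mul_ofReal (a n) (hermite_smooth n) k x']
      exact mul_le_mul_of_nonneg_left (habs k n x') (norm_nonneg _)
    have hTD : iteratedDeriv α (fun y : ℝ => ∑' n : ℕ, a n * (hermiteFn n y : ℂ)) x
        = ∑' n : ℕ, iteratedDeriv α (fun y : ℝ => a n * (hermiteFn n y : ℂ)) x := by
      have hsum_maps : Summable fun n : ℕ =>
          iteratedFDeriv ℝ α (fun y : ℝ => a n * (hermiteFn n y : ℂ)) x := by
        apply Summable.of_norm
        exact Summable.of_nonneg_of_le (fun n => norm_nonneg _)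
          (fun n => h'f α n x) (hmaj α)
      rw [iteratedDeriv_eq_iteratedFDeriv,
        iteratedFDeriv_tsum_apply (N := (⊤ : ℕ∞)) hFsm (fun k _ => hmaj k)
          (fun k n x' _ => h'f k n x') le_top]
      rw [← (ContinuousMultilinearMap.hasSum_eval hsum_maps.hasSum
        (fun _ : Fin α => (1:ℝ))).tsum_eq]
      exact tsum_congr fun n => (iteratedDeriv_eq_iteratedFDeriv).symm
    have hnormD : ∀ n : ℕ, ‖iteratedDeriv α (fun y : ℝ => a n * (hermiteFn n y : ℂ)) x‖
        = ‖a n‖ * |iteratedDeriv α (hermiteFn n) x| := by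
      intro n
      rw [← norm_iteratedFDeriv_eq_norm_iteratedDeriv]
      exact norm_iteratedFDeriv_const_mul_ofReal (a n) (hermite_smooth n) α x
    have hsumabs : Summable fun n : ℕ => ‖a n‖ * |iteratedDeriv α (hermiteFn n) x| := by
      apply Summable.of_nonneg_of_le (fun n => by positivity) (fun n => ?_) (hmaj α)
      exact mul_le_mul_of_nonneg_left (habs α n x) (norm_nonneg _)
    have hnorm2 : ‖iteratedDeriv α (fun y : ℝ => ∑' n : ℕ, a n * (hermiteFn n y : ℂ)) x‖
        ≤ ∑' n : ℕ, ‖a n‖ * |iteratedDeriv α (hermiteFn n) x| := by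
      rw [hTD]
      refine (norm_tsum_le_tsum_norm ?_).trans_eq (tsum_congr fun n => hnormD n)
      apply Summable.congr hsumabs
      intro n
      exact (hnormD n).symm
    have hw : 0 < m ^ (α + β) / (Mp α * Mp β) :=
      div_pos (pow_pos hm1 _) (mul_pos (hpos α) (hpos β))
    have hP : 0 < (1 + x ^ 2) ^ ((β : ℝ) / 2) := by positivity
    set w := m ^ (α + β) / (Mp α * Mp β) with hwdef
    set P := (1 + x ^ 2) ^ ((β : ℝ) / 2) with hPdef
    have hsummul : Summable fun n : ℕ =>
        w * (P * (‖a n‖ * |iteratedDeriv α (hermiteFn n) x|)) :=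
      (hsumabs.mul_left P).mul_left w
    calc w * (P * ‖iteratedDeriv α (fun y : ℝ => ∑' n : ℕ, a n * (hermiteFn n y : ℂ)) x‖)
        ≤ w * (P * ∑' n : ℕ, ‖a n‖ * |iteratedDeriv α (hermiteFn n) x|) := by
          apply mul_le_mul_of_nonneg_left (mul_le_mul_of_nonneg_left hnorm2 hP.le) hw.le
      _ = ∑' n : ℕ, w * (P * (‖a n‖ * |iteratedDeriv α (hermiteFn n) x|)) := by
          rw [← tsum_mul_left, ← tsum_mul_left]
      _ ≤ ∑' n : ℕ, C₁ * (‖a n‖ * Real.exp (MA (8 * m * H * Real.sqrt n))) := by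
          apply Summable.tsum_le_tsum ?_ hsummul ((hsum1.mul_left C₁))
          intro n
          have hpt := hptwise α β n x
          calc w * (P * (‖a n‖ * |iteratedDeriv α (hermiteFn n) x|))
              = ‖a n‖ * (w * (P * |iteratedDeriv α (hermiteFn n) x|)) := by ring
            _ ≤ ‖a n‖ * (C₁ * Real.exp (MA (8 * m * H * Real.sqrt n))) :=
                mul_le_mul_of_nonneg_left hpt (norm_nonneg _)
            _ = C₁ * (‖a n‖ * Real.exp (MA (8 * m * H * Real.sqrt n))) := by ring
      _ = C₁ * ∑' n : ℕ, ‖a n‖ * Real.exp (MA (8 * m * H * Real.sqrt n)) := tsum_mul_left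
      _ ≤ C₁ * (Real.sqrt T * Real.sqrt S) :=
          mul_le_mul_of_nonneg_left hsumbound hC₁.le
      _ ≤ C₁ * (Real.sqrt S + 1) * Real.sqrt T := by
          nlinarith [Real.sqrt_nonneg T, Real.sqrt_nonneg S, hC₁]
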